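/- Let G be a finite simple graph on vertex set [n] with edge set E, and for each edge e let x_e be an indeterminate. Then the generating polynomial of increasing spanning forests factors as Σ_{k=0}^{n} a_k(x) t^k = Π_{j=1}^{n} ( t + Σ_{1 ≤ i < j, (i,j) ∈ E} x_{(i,j)} ), where a_k(x) = Σ_{F∈IF_k} Π_{e∈F} x_e. -/

import Mathlib

open SimpleGraph

/-- The simple graph on `Fin n` whose edges are given by a finite set of
ordered pairs `(i, j)` (intended with `i < j`). -/
def graphOf {n : ℕ} (F : Finset (Fin n × Fin n)) : SimpleGraph (Fin n) :=
  SimpleGraph.fromRel (fun a b => (a, b) ∈ F)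

/-- `r` is the minimal vertex of its connected component in the forest `F`. -/
def IsCompMin {n : ℕ} (F : Finset (Fin n × Fin n)) (r : Fin n) : Prop :=
  ∀ w, (graphOf F).Reachable r w → r ≤ w

/-- The forest `F` is increasing: along every path starting at the minimal vertex
of a connected component, the vertex labels strictly increase. -/
def IsIncreasing {n : ℕ} (F : Finset (Fin n × Fin n)) : Prop :=
  ∀ (r v : Fin n) (p : (graphOf F).Walk r v),
    p.IsPath → IsCompMin F r → List.Chain' (· < ·) p.support

/-- `F` is an increasing spanning forest of the graph with edge set `E`. -/
def IsISF {n : ℕ} (E F : Finset (Fin n × Fin n)) : Prop :=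
  F ⊆ E ∧ (graphOf F).IsAcyclic ∧ IsIncreasing F

/-- Number of connected components of the forest `F` (isolated vertices count). -/
noncomputable def numComp {n : ℕ} (F : Finset (Fin n × Fin n)) : ℕ :=
  Nat.card (graphOf F).ConnectedComponent

/-- The set of increasing spanning forests of `E` with exactly `k` connected components. -/
def IFk {n : ℕ} (E : Finset (Fin n × Fin n)) (k : ℕ) : Set (Finset (Fin n × Fin n)) :=
  {F | IsISF E F ∧ numComp F = k}

/-- The generating polynomial `a_k(x)` of increasing spanning forests with `k` components. -/
noncomputable def aPoly {n : ℕ} (E : Finset (Fin n × Fin n)) (k : ℕ) :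
    MvPolynomial (Fin n × Fin n) ℝ :=
  ∑ᶠ F ∈ IFk E k, ∏ e ∈ F, MvPolynomial.X e

namespace ISFAux

variable {n : ℕ} {F : Finset (Fin n × Fin n)}

lemma adj_iff {a b : Fin n} :
    (graphOf F).Adj a b ↔ a ≠ b ∧ ((a, b) ∈ F ∨ (b, a) ∈ F) := by
  simp [graphOf, SimpleGraph.fromRel_adj]

lemma adj_cases (hord : ∀ e ∈ F, e.1 < e.2) {a b : Fin n}
    (h : (graphOf F).Adj a b) :
    ((a, b) ∈ F ∧ a < b) ∨ ((b, a) ∈ F ∧ b < a) := by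
  rcases adj_iff.1 h with ⟨-, h1 | h2⟩
  · exact Or.inl ⟨h1, hord _ h1⟩
  · exact Or.inr ⟨h2, hord _ h2⟩

lemma adj_of_mem (hord : ∀ e ∈ F, e.1 < e.2) {a b : Fin n} (h : (a, b) ∈ F) :
    (graphOf F).Adj a b :=
  adj_iff.2 ⟨(hord _ h).ne, Or.inl h⟩

/-- Key invariant lemma: along a path none of whose support vertices are
"parents" of the start, the support strictly increases. -/
lemma chain_of_inj (hord : ∀ e ∈ F, e.1 < e.2)
    (hinj : ∀ ⦃i i' j : Fin n⦄, (i, j) ∈ F → (i', j) ∈ F → i = i') :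
    ∀ {u v : Fin n} (p : (graphOf F).Walk u v), p.IsPath →
      (∀ i, (i, u) ∈ F → i ∉ p.support) → List.Chain' (· < ·) p.support := by
  intro u v p
  induction p with
  | nil => intro _ _; exact List.isChain_singleton _
  | @cons u u' v h q ih =>
    intro hp hH
    have hq : q.IsPath := (SimpleGraph.Walk.cons_isPath_iff h q).1 hp |>.1
    have hu : u ∉ q.support := (SimpleGraph.Walk.cons_isPath_iff h q).1 hp |>.2
    have huu' : (u, u') ∈ F ∧ u < u' := by
      rcases adj_cases hord h with h1 | ⟨h2, -⟩
      · exact h1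
      · exact absurd (q.start_mem_support) (by
          have := hH u' h2
          simp only [SimpleGraph.Walk.support_cons, List.mem_cons] at this
          push_neg at this
          exact this.2)
    have hH' : ∀ i, (i, u') ∈ F → i ∉ q.support := by
      intro i hi hmem
      rcases eq_or_ne i u with rfl | hne
      · exact hu hmem
      · exact hne (hinj hi huu'.1)
    have hchain := ih hq hH'
    rw [SimpleGraph.Walk.support_cons, q.support_eq_cons]
    rw [q.support_eq_cons] at hchain
    exact List.isChain_cons_cons.2 ⟨huu'.2, hchain⟩

lemma acyclic_of_inj (hord : ∀ e ∈ F, e.1 < e.2)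
    (hinj : ∀ ⦃i i' j : Fin n⦄, (i, j) ∈ F → (i', j) ∈ F → i = i') :
    (graphOf F).IsAcyclic := by
  intro v c hc
  -- pick the maximal vertex on the cycle
  have hne : c.support.toFinset.Nonempty := ⟨v, by simp⟩
  set w := c.support.toFinset.max' hne with hw
  have hwmem : w ∈ c.support := by
    have := c.support.toFinset.max'_mem hne
    simpa using this
  have hwmax : ∀ x ∈ c.support, x ≤ w := by
    intro x hx
    exact c.support.toFinset.le_max' x (by simpa using hx)
  set c' := c.rotate w hwmem with hc'def
  have hc' : c'.IsCycle := hc.rotate hwmem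
  have htail : ∀ x ∈ c'.support.tail, x ∈ c.support := by
    intro x hx
    have hperm := SimpleGraph.Walk.support_rotate c w hwmem
    have : x ∈ c.support.tail := hperm.mem_iff.1 hx
    exact List.mem_of_mem_tail this
  -- destructure c'
  cases hcc : c' with
  | nil => exact SimpleGraph.Walk.IsCycle.not_of_nil (hcc ▸ hc')
  | @cons _ u _ h q =>
    rw [hcc] at hc'
    rw [SimpleGraph.Walk.cons_isCycle_iff] at hc'
    obtain ⟨hqpath, hedge⟩ := hc'
    -- u is the second vertex, it's < w
    have huc : u ∈ c.support := by
      apply htail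
      rw [hcc, SimpleGraph.Walk.support_cons, List.tail_cons]
      exact q.start_mem_support
    have hult : u < w := lt_of_le_of_ne (hwmax u huc) (adj_iff.1 h).1.symm
    -- first edge into w: (u, w) ∈ F
    have hfirst : (u, w) ∈ F := by
      rcases adj_cases hord h with ⟨h1, hlt⟩ | ⟨h2, -⟩
      · exact absurd hlt (not_lt.2 hult.le)
      · exact h2
    -- last dart of q enters w
    have hqne : q.darts ≠ [] := by
      intro hnil
      have htl : q.support.tail = [] := by
        rw [← q.map_snd_darts, hnil]; rfl
      have : w ∈ q.support := q.end_mem_support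
      rw [q.support_eq_cons, htl] at this
      simp at this
      exact (adj_iff.1 h).1 this
    set d := q.darts.getLast hqne with hd
    have hdsnd : d.snd = w := by rw [hd, SimpleGraph.Walk.getLast_darts_eq_lastDart]; rfl
    have hdmem : d ∈ q.darts := List.getLast_mem hqne
    have hdfst_mem : d.fst ∈ q.support := q.dart_fst_mem_support_of_mem_darts hdmem
    have hdadj : (graphOf F).Adj d.fst w := hdsnd ▸ d.adj
    have hdlt : d.fst < w := by
      apply lt_of_le_of_ne _ hdadj.ne
      apply hwmax
      rcases eq_or_ne d.fst w with hfw | hfw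
      · exact hfw ▸ hwmem
      · apply htail
        rw [hcc, SimpleGraph.Walk.support_cons, List.tail_cons]
        exact hdfst_mem
    have hsecond : (d.fst, w) ∈ F := by
      rcases adj_cases hord hdadj with ⟨h1, -⟩ | ⟨h2, hlt⟩
      · exact h1
      · exact absurd hlt (not_lt.2 hdlt.le)
    -- injectivity: u = d.fst
    have hud : u = d.fst := hinj hfirst hsecond
    -- but then s(w, u) ∈ q.edges, contradiction
    apply hedge
    have hmem : d.edge ∈ q.edges := List.mem_map_of_mem hdmem
    have heq : d.edge = s(w, u) := by
      have h0 : d.edge = s(d.fst, d.snd) := rfl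
      rw [h0, hdsnd, ← hud, Sym2.eq_swap]
    rwa [heq] at hmem
lemma no_parent_of_compMin (hord : ∀ e ∈ F, e.1 < e.2) {r : Fin n}
    (hr : IsCompMin F r) : ∀ i, (i, r) ∉ F := by
  intro i hi
  have hlt : i < r := hord _ hi
  have hadj : (graphOf F).Adj r i := (adj_of_mem hord hi).symm
  exact absurd (hr i hadj.reachable) (not_le.2 hlt)

lemma increasing_of_inj (hord : ∀ e ∈ F, e.1 < e.2)
    (hinj : ∀ ⦃i i' j : Fin n⦄, (i, j) ∈ F → (i', j) ∈ F → i = i') :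
    IsIncreasing F := by
  intro r v p hp hr
  exact chain_of_inj hord hinj p hp (fun i hi _ => no_parent_of_compMin hord hr i hi)

/-- every element of a strictly increasing list is at most its last element -/
lemma le_getLast_of_pairwise {α : Type*} [LinearOrder α] :
    ∀ {l : List α}, l.Pairwise (· < ·) → ∀ {x}, x ∈ l → ∀ (h : l ≠ []),
      x ≤ l.getLast h := by
  intro l
  induction l with
  | nil => intro _ x hx; simp at hx
  | cons a t ih =>
    intro hp x hx hne
    rcases List.mem_cons.1 hx with rfl | hxt
    · rcases eq_or_ne t [] with rfl | htne
      · simp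
      · rw [List.getLast_cons htne]
        exact ((List.pairwise_cons.1 hp).1 _ (List.getLast_mem htne)).le
    · have htne : t ≠ [] := List.ne_nil_of_mem hxt
      rw [List.getLast_cons htne]
      exact ih (List.pairwise_cons.1 hp).2 hxt htne

lemma compMin_exists (v : Fin n) :
    ∃ r, IsCompMin F r ∧ (graphOf F).Reachable r v := by
  classical
  set S := Finset.univ.filter (fun w => (graphOf F).Reachable v w) with hS
  have hne : S.Nonempty := ⟨v, by simp [hS]⟩
  refine ⟨S.min' hne, ?_, ?_⟩
  · intro w hw
    have hrv : (graphOf F).Reachable v (S.min' hne) := by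
      have := S.min'_mem hne
      simp [hS] at this
      exact this
    have : w ∈ S := by simp only [hS, Finset.mem_filter, Finset.mem_univ, true_and]; exact hrv.trans hw
    exact S.min'_le w this
  · have := S.min'_mem hne
    simp [hS] at this
    exact this.symm

lemma inj_of_isISF {E : Finset (Fin n × Fin n)} (hE : ∀ e ∈ E, e.1 < e.2)
    (hFE : F ⊆ E) (hacyc : (graphOf F).IsAcyclic) (hinc : IsIncreasing F) :
    ∀ ⦃i i' j : Fin n⦄, (i, j) ∈ F → (i', j) ∈ F → i = i' := by
  have hord : ∀ e ∈ F, e.1 < e.2 := fun e he => hE e (hFE he)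
  intro i i' j hi hi'
  by_contra hne
  obtain ⟨r, hrmin, hrj⟩ := compMin_exists (F := F) j
  -- given an edge (a, j) ∈ F, build a path r → j whose last edge is s(j, a)
  have build : ∀ a : Fin n, (a, j) ∈ F →
      ∃ P : (graphOf F).Path r j, s(j, a) ∈ (P : (graphOf F).Walk r j).edges ∧
        ∀ e ∈ (P : (graphOf F).Walk r j).edges, e = s(j, a) ∨ ∃ q : (graphOf F).Walk r a,
          j ∉ q.support ∧ e ∈ q.edges := by
    intro a ha
    have hadj : (graphOf F).Adj a j := adj_of_mem hord ha
    have hra : (graphOf F).Reachable r a := hrj.trans hadj.reachable.symm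
    obtain ⟨W⟩ := hra
    set p : (graphOf F).Path r a := W.toPath with hpdef
    have hchain : List.Chain' (· < ·) (p : (graphOf F).Walk r a).support :=
      hinc r a p p.2 hrmin
    have hjns : j ∉ (p : (graphOf F).Walk r a).support := by
      intro hmem
      have hle : j ≤ a := by
        have := le_getLast_of_pairwise (List.isChain_iff_pairwise.1 hchain) hmem
          (by simp)
        rwa [SimpleGraph.Walk.getLast_support] at this
      exact absurd (hord _ ha) (not_lt.2 hle)
    set Q : (graphOf F).Walk r j :=
      (SimpleGraph.Walk.cons hadj.symm (p : (graphOf F).Walk r a).reverse).reverse with hQ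
    have hQpath : Q.IsPath := by
      apply SimpleGraph.Walk.IsPath.reverse
      rw [SimpleGraph.Walk.cons_isPath_iff]
      exact ⟨p.2.reverse, by
        rw [SimpleGraph.Walk.support_reverse, List.mem_reverse]; exact hjns⟩
    have hQedges : Q.edges = ((s(j, a) :: (p : (graphOf F).Walk r a).reverse.edges).reverse) := by
      rw [hQ, SimpleGraph.Walk.edges_reverse, SimpleGraph.Walk.edges_cons]
    refine ⟨⟨Q, hQpath⟩, ?_, ?_⟩
    · rw [hQedges]
      simp
    · intro e he
      rw [hQedges, List.mem_reverse, List.mem_cons] at he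
      rcases he with he | he
      · exact Or.inl he
      · exact Or.inr ⟨p, hjns, by
          rwa [SimpleGraph.Walk.edges_reverse, List.mem_reverse] at he⟩
  obtain ⟨P, hPe, _⟩ := build i hi
  obtain ⟨P', hP'e, hP'all⟩ := build i' hi'
  have hPP' : P = P' := SimpleGraph.isAcyclic_iff_path_unique.1 hacyc P P'
  rw [hPP'] at hPe
  rcases hP'all _ hPe with heq | ⟨q, hjq, hmem⟩
  · have : i = i' := by
      have := Sym2.congr_right.1 heq
      exact this
    exact hne this
  · exact hjq (q.fst_mem_support_of_mem_edges hmem)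

open Classical in
/-- the minimal vertex of a connected component -/
noncomputable def compMinV (F : Finset (Fin n × Fin n))
    (c : (graphOf F).ConnectedComponent) : Fin n :=
  (Finset.univ.filter (fun v => (graphOf F).connectedComponentMk v = c)).min'
    (by
      obtain ⟨v, hv⟩ := c.exists_rep
      exact ⟨v, by simp only [Finset.mem_filter, Finset.mem_univ, true_and]; exact hv⟩)

open Classical in
lemma compMinV_mk (c : (graphOf F).ConnectedComponent) :
    (graphOf F).connectedComponentMk (compMinV F c) = c := by
  have := Finset.min'_mem
    (Finset.univ.filter (fun v => (graphOf F).connectedComponentMk v = c))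
    (by obtain ⟨v, hv⟩ := c.exists_rep; exact ⟨v, by simp only [Finset.mem_filter, Finset.mem_univ, true_and]; exact hv⟩)
  simpa [compMinV] using this

open Classical in
lemma compMinV_le {c : (graphOf F).ConnectedComponent} {v : Fin n}
    (hv : (graphOf F).connectedComponentMk v = c) : compMinV F c ≤ v := by
  exact Finset.min'_le _ v (by simp [hv])

lemma compMinV_isCompMin (c : (graphOf F).ConnectedComponent) :
    IsCompMin F (compMinV F c) := by
  intro w hw
  apply compMinV_le
  rw [← compMinV_mk (F := F) c]
  exact (SimpleGraph.ConnectedComponent.eq).2 hw.symm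

/-- a root (vertex with no parent) is the minimum of its component -/
lemma root_eq_compMin (hord : ∀ e ∈ F, e.1 < e.2)
    (hinj : ∀ ⦃i i' j : Fin n⦄, (i, j) ∈ F → (i', j) ∈ F → i = i')
    {j : Fin n} (hroot : ∀ i, (i, j) ∉ F) :
    j = compMinV F ((graphOf F).connectedComponentMk j) := by
  set c := (graphOf F).connectedComponentMk j with hc
  set r := compMinV F c with hr
  have hreach : (graphOf F).Reachable r j := by
    apply (SimpleGraph.ConnectedComponent.eq).1
    rw [compMinV_mk]
  obtain ⟨W⟩ := hreach
  set p : (graphOf F).Path r j := W.toPath with hp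
  have hchain : List.Chain' (· < ·) (p : (graphOf F).Walk r j).support :=
    increasing_of_inj hord hinj r j p p.2 (compMinV_isCompMin c)
  -- show the path is trivial
  set W' : (graphOf F).Walk r j := (p : (graphOf F).Walk r j) with hW'
  rcases eq_or_ne W'.darts [] with hd0 | hdne
  · have htl : W'.support.tail = [] := by rw [← W'.map_snd_darts, hd0]; rfl
    have hsup : W'.support = [r] := by
      rw [W'.support_eq_cons, htl]
    have hj : j ∈ W'.support := W'.end_mem_support
    rw [hsup] at hj
    simpa using hj
  · exfalso
    set d := W'.darts.getLast hdne with hd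
    have hdsnd : d.snd = j := by rw [hd, SimpleGraph.Walk.getLast_darts_eq_lastDart]; rfl
    have hdmem : d ∈ W'.darts := List.getLast_mem hdne
    have hdfst : d.fst ∈ W'.support :=
      SimpleGraph.Walk.dart_fst_mem_support_of_mem_darts _ hdmem
    have hdadj : (graphOf F).Adj d.fst j := hdsnd ▸ d.adj
    rcases adj_cases hord hdadj with ⟨h1, -⟩ | ⟨h2, hlt⟩
    · exact hroot _ h1
    · have hle : d.fst ≤ j := by
        have := le_getLast_of_pairwise (List.isChain_iff_pairwise.1 hchain)
          hdfst (by simp)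
        rwa [SimpleGraph.Walk.getLast_support] at this
      exact absurd hlt (not_lt.2 hle)

lemma numComp_eq (hord : ∀ e ∈ F, e.1 < e.2)
    (hinj : ∀ ⦃i i' j : Fin n⦄, (i, j) ∈ F → (i', j) ∈ F → i = i') :
    numComp F = n - F.card := by
  classical
  set Roots := Finset.univ.filter (fun j : Fin n => ∀ i, (i, j) ∉ F) with hRoots
  have hbij : Function.Bijective
      (fun c : (graphOf F).ConnectedComponent =>
        (⟨compMinV F c, by
          simp only [hRoots, Finset.mem_filter, Finset.mem_univ, true_and]
          exact no_parent_of_compMin hord (compMinV_isCompMin c)⟩ : {x // x ∈ Roots})) := by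
    constructor
    · intro c c' hcc'
      have : compMinV F c = compMinV F c' := congrArg Subtype.val hcc'
      rw [← compMinV_mk (F := F) c, ← compMinV_mk (F := F) c', this]
    · rintro ⟨j, hj⟩
      simp only [hRoots, Finset.mem_filter, Finset.mem_univ, true_and] at hj
      refine ⟨(graphOf F).connectedComponentMk j, ?_⟩
      simp only [Subtype.mk.injEq]
      exact (root_eq_compMin hord hinj hj).symm
  have h1 : numComp F = Roots.card := by
    rw [numComp, Nat.card_eq_of_bijective _ hbij, Nat.card_eq_finsetCard]
  have h2 : Roots = Finset.univ \ F.image Prod.snd := by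
    ext j
    simp only [hRoots, Finset.mem_filter, Finset.mem_univ, true_and, Finset.mem_sdiff,
      Finset.mem_image, not_exists]
    constructor
    · rintro h ⟨a, b⟩ ⟨hab, rfl⟩
      exact h a hab
    · intro h i hij
      exact h (i, j) ⟨hij, rfl⟩
  have h3 : (F.image Prod.snd).card = F.card := by
    apply Finset.card_image_of_injOn
    rintro ⟨a, b⟩ ha ⟨a', b'⟩ ha' hb
    simp only at hb
    subst hb
    exact Prod.ext (hinj ha ha') rfl
  rw [h1, h2, Finset.card_sdiff_of_subset (Finset.subset_univ _), h3]
  simp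

lemma isISF_iff_good {E F : Finset (Fin n × Fin n)} (hE : ∀ e ∈ E, e.1 < e.2) :
    IsISF E F ↔ (F ⊆ E ∧ ∀ ⦃i i' j : Fin n⦄, (i, j) ∈ F → (i', j) ∈ F → i = i') := by
  constructor
  · rintro ⟨h1, h2, h3⟩
    exact ⟨h1, inj_of_isISF hE h1 h2 h3⟩
  · rintro ⟨h1, h2⟩
    have hord : ∀ e ∈ F, e.1 < e.2 := fun e he => hE e (h1 he)
    exact ⟨h1, acyclic_of_inj hord h2, increasing_of_inj hord h2⟩

end ISFAux

open ISFAux Finset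

/-- Hallam–Martin–Sagan factorization of the generating polynomial of
increasing spanning forests:
Σ_k a_k(x) t^k = Π_j ( t + Σ_(i<j, (i,j)∈E) x_(i,j) ). -/
theorem isf_generating_poly_factors (n : ℕ) (hn : 1 ≤ n)
    (E : Finset (Fin n × Fin n)) (hE : ∀ e ∈ E, e.1 < e.2) :
    ∑ k ∈ Finset.range (n + 1), Polynomial.C (aPoly E k) * Polynomial.X ^ k =
      ∏ j : Fin n,
        (Polynomial.X + Polynomial.C
          (∑ i ∈ Finset.univ.filter (fun i : Fin n => i < j ∧ (i, j) ∈ E),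
            MvPolynomial.X (i, j))) := by
  classical
  set R := MvPolynomial (Fin n × Fin n) ℝ
  set A : Fin n → Finset (Fin n) :=
    fun j => Finset.univ.filter (fun i : Fin n => i < j ∧ (i, j) ∈ E) with hA
  set O : Fin n → Finset (Option (Fin n)) :=
    fun j => insert none ((A j).image some) with hO
  set h : Fin n → Option (Fin n) → Polynomial R :=
    fun j o => o.elim Polynomial.X (fun i => Polynomial.C (MvPolynomial.X (i, j))) with hh
  set Fof : (Fin n → Option (Fin n)) → Finset (Fin n × Fin n) :=
    fun φ => E.filter (fun e => φ e.2 = some e.1) with hFof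
  set Good : Finset (Fin n × Fin n) → Prop :=
    fun F => F ⊆ E ∧ ∀ ⦃i i' j : Fin n⦄, (i, j) ∈ F → (i', j) ∈ F → i = i' with hGood
  set GoodF : Finset (Finset (Fin n × Fin n)) := Finset.univ.filter Good with hGoodF
  set mono : Finset (Fin n × Fin n) → R := fun F => ∏ e ∈ F, MvPolynomial.X e with hmono
  -- STEP 1: each RHS factor is a sum over options
  have factor_eq : ∀ j : Fin n,
      Polynomial.X + Polynomial.C (∑ i ∈ A j, MvPolynomial.X (i, j)) =
        ∑ o ∈ O j, h j o := by
    intro j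
    rw [hO]
    rw [Finset.sum_insert (by simp)]
    rw [Finset.sum_image (by intros a _ b _ hab; exact Option.some_injective _ hab)]
    simp only [hh, Option.elim]
    rw [map_sum]
  -- STEP 2: expand the product
  have expand : (∏ j : Fin n, ∑ o ∈ O j, h j o) =
      ∑ φ ∈ Fintype.piFinset O, ∏ j : Fin n, h j (φ j) :=
    Finset.prod_univ_sum O h
  -- STEP 3: each summand
  have summand : ∀ φ ∈ Fintype.piFinset O,
      (∏ j : Fin n, h j (φ j)) =
        Polynomial.X ^ (n - (Fof φ).card) * Polynomial.C (mono (Fof φ)) := by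
    intro φ hφ
    have hmemO : ∀ j, φ j ∈ O j := by
      intro j; exact (Fintype.mem_piFinset.1 hφ) j
    -- the bijection between non-none positions and Fof φ
    have hbij : ∀ (f : Fin n → Polynomial R),
        (∏ j ∈ Finset.univ.filter (fun j => ¬ φ j = none), f j) =
          ∏ e ∈ Fof φ, f e.2 := by
      intro f
      refine (Finset.prod_bij (fun (e : Fin n × Fin n) (_ : e ∈ Fof φ) => e.2)
        ?_ ?_ ?_ ?_).symm
      · intro e he
        simp only [hFof, Finset.mem_filter] at he
        simp [he.2]
      · intro e he e' he' hee'
        simp only [hFof, Finset.mem_filter] at he he'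
        have hee2 : e.2 = e'.2 := hee'
        have := he.2.symm.trans (hee2 ▸ he'.2)
        exact Prod.ext (Option.some_injective _ this) hee2
      · intro j hj
        simp only [Finset.mem_filter, Finset.mem_univ, true_and] at hj
        obtain ⟨i, hi⟩ := Option.ne_none_iff_exists'.1 hj
        have : some i ∈ O j := hi ▸ hmemO j
        rw [hO] at this
        simp only [Finset.mem_insert, Finset.mem_image] at this
        rcases this with h0 | ⟨a, haA, ha⟩
        · exact absurd h0 (by simp)
        · have haa : a = i := Option.some_injective _ ha
          subst haa
          rw [hA] at haA
          simp only [Finset.mem_filter, Finset.mem_univ, true_and] at haA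
          refine ⟨(a, j), ?_, rfl⟩
          simp [hFof, haA.2, hi]
      · intro e he; rfl
    have hcard : (Finset.univ.filter (fun j => φ j = none)).card = n - (Fof φ).card := by
      have h1 : (Finset.univ.filter (fun j => φ j = none)).card +
          (Finset.univ.filter (fun j => ¬ φ j = none)).card = n := by
        rw [Finset.card_filter_add_card_filter_not]
        simp
      have h2 : (Finset.univ.filter (fun j => ¬ φ j = none)).card = (Fof φ).card := by
        have := hbij (fun _ => (1 : Polynomial R))
        -- use card_bij instead
        refine (Finset.card_bij (fun (e : Fin n × Fin n) (_ : e ∈ Fof φ) => e.2)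
          ?_ ?_ ?_).symm
        · intro e he
          simp only [hFof, Finset.mem_filter] at he
          simp [he.2]
        · intro e he e' he' hee'
          simp only [hFof, Finset.mem_filter] at he he'
          have hee2 : e.2 = e'.2 := hee'
          have := he.2.symm.trans (hee2 ▸ he'.2)
          exact Prod.ext (Option.some_injective _ this) hee2
        · intro j hj
          simp only [Finset.mem_filter, Finset.mem_univ, true_and] at hj
          obtain ⟨i, hi⟩ := Option.ne_none_iff_exists'.1 hj
          have : some i ∈ O j := hi ▸ hmemO j
          rw [hO] at this
          simp only [Finset.mem_insert, Finset.mem_image] at this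
          rcases this with h0 | ⟨a, haA, ha⟩
          · exact absurd h0 (by simp)
          · have haa : a = i := Option.some_injective _ ha
            subst haa
            rw [hA] at haA
            simp only [Finset.mem_filter, Finset.mem_univ, true_and] at haA
            refine ⟨(a, j), ?_, rfl⟩
            simp [hFof, haA.2, hi]
      omega
    rw [← Finset.prod_filter_mul_prod_filter_not Finset.univ (fun j => φ j = none)]
    congr 1
    · rw [Finset.prod_congr rfl (fun j hj => ?_), Finset.prod_const, hcard]
      have : φ j = none := (Finset.mem_filter.1 hj).2
      simp [hh, this]
    · rw [hbij (fun j => h j (φ j))]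
      rw [hmono, map_prod]
      refine Finset.prod_congr rfl (fun e he => ?_)
      simp only [hFof, Finset.mem_filter] at he
      rw [he.2]
      simp [hh]
  -- STEP 4: reindex the sum over φ by forests
  set ψ : Finset (Fin n × Fin n) → (Fin n → Option (Fin n)) :=
    fun F j => if hx : ∃ i, (i, j) ∈ F then some hx.choose else none with hψ
  have step4 : (∑ φ ∈ Fintype.piFinset O,
        Polynomial.X ^ (n - (Fof φ).card) * Polynomial.C (mono (Fof φ))) =
      ∑ F ∈ GoodF, Polynomial.X ^ (n - F.card) * Polynomial.C (mono F) := by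
    refine Finset.sum_nbij' (i := Fof) (j := ψ) ?_ ?_ ?_ ?_ ?_
    · -- Fof φ ∈ GoodF
      intro φ hφ
      have hmemO : ∀ j, φ j ∈ O j := fun j => (Fintype.mem_piFinset.1 hφ) j
      simp only [hGoodF, Finset.mem_filter, Finset.mem_univ, true_and]
      constructor
      · exact Finset.filter_subset _ _
      · intro i i' j hi hi'
        simp only [hFof, Finset.mem_filter] at hi hi'
        exact Option.some_injective _ (hi.2.symm.trans hi'.2)
    · -- ψ F ∈ piFinset O
      intro F hF
      simp only [hGoodF, Finset.mem_filter, Finset.mem_univ, true_and] at hF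
      rw [Fintype.mem_piFinset]
      intro j
      simp only [hψ]
      by_cases hx : ∃ i, (i, j) ∈ F
      · rw [dif_pos hx]
        have hc := hx.choose_spec
        have hcE : (hx.choose, j) ∈ E := hF.1 hc
        have hclt : hx.choose < j := hE _ hcE
        rw [hO]
        refine Finset.mem_insert_of_mem (Finset.mem_image_of_mem _ ?_)
        rw [hA]
        simp [hclt, hcE]
      · rw [dif_neg hx]
        rw [hO]; exact Finset.mem_insert_self _ _
    · -- left inverse
      intro φ hφ
      have hmemO : ∀ j, φ j ∈ O j := fun j => (Fintype.mem_piFinset.1 hφ) j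
      funext j
      simp only [hψ]
      by_cases hx : ∃ i, (i, j) ∈ Fof φ
      · have key : ∀ (i : Fin n), (i, j) ∈ Fof φ → φ j = some i := by
          intro i hi
          simp only [hFof, Finset.mem_filter] at hi
          exact hi.2
        rw [dif_pos hx]
        exact (key _ hx.choose_spec).symm
      · rw [dif_neg hx]
        rcases ho : φ j with _ | i
        · rfl
        · exfalso
          have : some i ∈ O j := ho ▸ hmemO j
          rw [hO] at this
          simp only [Finset.mem_insert, Finset.mem_image] at this
          rcases this with h0 | ⟨a, haA, ha⟩
          · exact absurd h0 (by simp)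
          · have haa : a = i := Option.some_injective _ ha
            subst haa
            rw [hA] at haA
            simp only [Finset.mem_filter, Finset.mem_univ, true_and] at haA
            exact hx ⟨a, by simp [hFof, haA.2, ho]⟩
    · -- right inverse
      intro F hF
      simp only [hGoodF, Finset.mem_filter, Finset.mem_univ, true_and] at hF
      ext e
      simp only [hFof, Finset.mem_filter]
      constructor
      · rintro ⟨heE, hee⟩
        simp only [hψ] at hee
        by_cases hx : ∃ i, (i, e.2) ∈ F
        · rw [dif_pos hx] at hee
          have := Option.some_injective _ hee
          have hc := hx.choose_spec
          rw [this] at hc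
          rwa [Prod.mk.eta] at hc
        · rw [dif_neg hx] at hee
          exact absurd hee (by simp)
      · intro heF
        refine ⟨hF.1 heF, ?_⟩
        simp only [hψ]
        have hx : ∃ i, (i, e.2) ∈ F := ⟨e.1, by rwa [Prod.mk.eta]⟩
        rw [dif_pos hx]
        have hc := hx.choose_spec
        have : hx.choose = e.1 := hF.2 hc (by rwa [Prod.mk.eta])
        rw [this]
    · intro φ hφ
      rfl
  -- STEP 5: the LHS
  have hSF : ∀ k, IFk E k = ↑(GoodF.filter (fun F => numComp F = k)) := by
    intro k
    ext F
    simp only [IFk, Set.mem_setOf_eq, Finset.coe_filter, hGoodF, Finset.mem_filter,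
      Finset.mem_univ, true_and, Set.mem_setOf_eq]
    rw [isISF_iff_good hE]
  have haPoly : ∀ k, aPoly E k = ∑ F ∈ GoodF.filter (fun F => numComp F = k), mono F := by
    intro k
    rw [aPoly, hSF k, finsum_mem_coe_finset]
  have hnumComp : ∀ F ∈ GoodF, numComp F = n - F.card := by
    intro F hF
    simp only [hGoodF, Finset.mem_filter, Finset.mem_univ, true_and] at hF
    exact numComp_eq (fun e he => hE e (hF.1 he)) hF.2
  calc
    ∑ k ∈ Finset.range (n + 1), Polynomial.C (aPoly E k) * Polynomial.X ^ k
      = ∑ k ∈ Finset.range (n + 1), ∑ F ∈ GoodF.filter (fun F => numComp F = k),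
          Polynomial.C (mono F) * Polynomial.X ^ numComp F := by
        refine Finset.sum_congr rfl (fun k _ => ?_)
        rw [haPoly k, map_sum, Finset.sum_mul]
        refine Finset.sum_congr rfl (fun F hF => ?_)
        rw [(Finset.mem_filter.1 hF).2]
    _ = ∑ F ∈ GoodF, Polynomial.C (mono F) * Polynomial.X ^ numComp F := by
        refine Finset.sum_fiberwise_of_maps_to ?_ _
        intro F hF
        rw [Finset.mem_range, hnumComp F hF]
        omega
    _ = ∑ F ∈ GoodF, Polynomial.X ^ (n - F.card) * Polynomial.C (mono F) := by
        refine Finset.sum_congr rfl (fun F hF => ?_)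
        rw [hnumComp F hF, mul_comm]
    _ = ∑ φ ∈ Fintype.piFinset O,
          Polynomial.X ^ (n - (Fof φ).card) * Polynomial.C (mono (Fof φ)) := step4.symm
    _ = ∑ φ ∈ Fintype.piFinset O, ∏ j : Fin n, h j (φ j) :=
        (Finset.sum_congr rfl summand).symm
    _ = ∏ j : Fin n, ∑ o ∈ O j, h j o := expand.symm
    _ = ∏ j : Fin n,
        (Polynomial.X + Polynomial.C (∑ i ∈ A j, MvPolynomial.X (i, j))) :=
        Finset.prod_congr rfl (fun j _ => (factor_eq j).symm)
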